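/- A language L ⊆ A^I is irreducible if and only if every simplicial complex generating L is connected. Equivalently: there is a nontrivial partition I = I₀ ⊔ I₁ with L = π_{I₀}(L) × π_{I₁}(L) if and only if L is generated by some disconnected complex. -/

import Mathlib

/-- `W` determines output coordinate `i` of `f`: the value `f x i` only
depends on the restriction of `x` to `W`. -/
def Determines {B J A I : Type*} (f : (J → B) → (I → A)) (i : I) (W : Set J) : Prop :=
  ∀ x y : J → B, (∀ j ∈ W, x j = y j) → f x i = f y i

/-- The input window of output coordinate `i`: the intersection of all
determining sets (which, for finite data, is the smallest determining set). -/
def window {B J A I : Type*} (f : (J → B) → (I → A)) (i : I) : Set J :=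
  ⋂₀ {W : Set J | Determines f i W}

/-- The dual window of an input coordinate `j`. -/
def dualWindow {B J A I : Type*} (f : (J → B) → (I → A)) (j : J) : Set I :=
  {i : I | j ∈ window f i}

/-- The communication complex of `f`: `S ∈ K_f` iff `⋂_{i ∈ S} W_f(i) ≠ ∅`
(the empty intersection being all of `J`). -/
def commComplex {B J A I : Type*} (f : (J → B) → (I → A)) : Set (Set I) :=
  {S : Set I | (⋂ i ∈ S, window f i).Nonempty}

/-- A complex `K` over `I` generates the language `L ⊆ A^I` if some function
`f : B^J → A^I` (with `B, J` finite, `J` nonempty) has image `L` and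
communication complex contained in `K`. -/
def Generates {A I : Type*} (K : Set (Set I)) (L : Set (I → A)) : Prop :=
  ∃ (B J : Type) (_ : Finite B) (_ : Finite J) (_ : Nonempty J)
    (f : (J → B) → (I → A)), Set.range f = L ∧ commComplex f ⊆ K

/-- A complex is connected if no nontrivial partition of the vertex set splits
all of its simplices. -/
def ConnectedComplex {I : Type*} (K : Set (Set I)) : Prop :=
  ¬ ∃ I0 : Set I, I0 ≠ ∅ ∧ I0 ≠ Set.univ ∧ ∀ S ∈ K, S ⊆ I0 ∨ S ⊆ I0ᶜ

/-- A simplicial complex: a downward closed collection of subsets. -/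
def IsComplex {I : Type*} (K : Set (Set I)) : Prop :=
  ∀ S ∈ K, ∀ T ⊆ S, T ∈ K

/-- The 1-skeleton of a complex, as a simple graph. -/
def skeletonGraph {I : Type*} (K : Set (Set I)) : SimpleGraph I :=
  SimpleGraph.fromRel (fun i j => ({i, j} : Set I) ∈ K)

/-- The complex associated to a graph: the empty set, the singletons, and the
edges. -/
def treeComplex {I : Type*} (G : SimpleGraph I) : Set (Set I) :=
  {S | S = ∅ ∨ (∃ i, S = {i}) ∨ ∃ i j, G.Adj i j ∧ S = ({i, j} : Set I)}

/-- The maximal simplices of a complex. -/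
def maxSimplices {I : Type*} (K : Set (Set I)) : Set (Set I) :=
  {S | S ∈ K ∧ ∀ T ∈ K, S ⊆ T → S = T}

/-- The image `f_*(K)` of a complex `K` on the input coordinates of `f`:
generated by the unions of dual windows over simplices of `K`. -/
def pushComplex {B J A I : Type*} (f : (J → B) → (I → A)) (K : Set (Set J)) : Set (Set I) :=
  {T : Set I | ∃ S ∈ K, T ⊆ ⋃ j ∈ S, dualWindow f j}


/-- `L` splits as a product along the partition `I = I0 ⊔ I0ᶜ`:
`L = π_{I0}(L) × π_{I0ᶜ}(L)`. -/
def SplitBy {A I : Type*} (L : Set (I → A)) (I0 : Set I) : Prop :=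
  L = {x | (∃ y ∈ L, ∀ i ∈ I0, x i = y i) ∧ (∃ y ∈ L, ∀ i ∉ I0, x i = y i)}


/-! A disconnected complex containing `K_f` forces every input coordinate of `f` to feed only one
side of the partition, so the inputs of two words of `L` can be mixed, side by side, into an input
producing any word glued from their two halves. Conversely, if `L` splits along `I0`, the map that
replaces `x|_{I0}` (resp. `x|_{I0ᶜ}`) by a fixed word of `L` unless it already occurs in
`π_{I0}(L)` (resp. `π_{I0ᶜ}(L)`) has image `L`, and each of its output coordinates reads only the
inputs on its own side. -/

open Set

section Windows

variable {B J A I : Type*} (f : (J → B) → (I → A))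

/-- The determining sets of a coordinate form a filter, whose kernel is the window. -/
def determiningFilter (i : I) : Filter J where
  sets := {W | Determines f i W}
  univ_sets x y hxy := congrArg (f · i) (funext fun j => hxy j trivial)
  sets_of_superset hW hWV x y hxy := hW x y fun j hj => hxy j (hWV hj)
  inter_sets {W₁ W₂} h₁ h₂ x y hxy := by
    classical
    let z : J → B := W₁.piecewise x y
    calc f x i = f z i := h₁ x z fun j hj => (piecewise_eq_of_mem _ _ _ hj).symm
      _ = f y i := h₂ z y fun j hj => by
        by_cases hj₁ : j ∈ W₁
        · show W₁.piecewise x y j = y j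
          rw [piecewise_eq_of_mem _ _ _ hj₁]
          exact hxy j ⟨hj₁, hj⟩
        · exact piecewise_eq_of_notMem _ _ _ hj₁

theorem determines_window [Finite J] (i : I) : Determines f i (window f i) :=
  (Filter.sInter_mem (s := (determiningFilter f i).sets) (toFinite _)).2 fun _ hW => hW

theorem window_subset_of_determines {i : I} {W : Set J} (h : Determines f i W) :
    window f i ⊆ W :=
  sInter_subset_of_mem h

theorem dualWindow_mem_commComplex (j : J) : dualWindow f j ∈ commComplex f :=
  ⟨j, mem_iInter₂.2 fun _ hi => hi⟩

end Windows

section Split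

variable {A I : Type*}

theorem splitBy_of_forall_mem {L : Set (I → A)} {I0 : Set I}
    (h : ∀ x, (∃ y ∈ L, EqOn x y I0) → (∃ y ∈ L, EqOn x y I0ᶜ) → x ∈ L) : SplitBy L I0 :=
  Subset.antisymm (fun x hx => ⟨⟨x, hx, fun _ _ => rfl⟩, ⟨x, hx, fun _ _ => rfl⟩⟩)
    fun x ⟨h₀, h₁⟩ => h x h₀ h₁

theorem splitBy_range_of_commComplex {B J : Type*} [Finite J] {f : (J → B) → (I → A)}
    {I0 : Set I} (hf : ∀ S ∈ commComplex f, S ⊆ I0 ∨ S ⊆ I0ᶜ) : SplitBy (range f) I0 := by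
  classical
  refine splitBy_of_forall_mem fun x ⟨_, ⟨u, rfl⟩, hu⟩ ⟨_, ⟨v, rfl⟩, hv⟩ => ?_
  let w : J → B := fun j => if dualWindow f j ⊆ I0 then u j else v j
  refine ⟨w, funext fun i => ?_⟩
  by_cases hi : i ∈ I0
  · rw [hu hi]
    refine determines_window f i w u fun j hj => if_pos ?_
    exact (hf _ (dualWindow_mem_commComplex f j)).resolve_right fun h => h hj hi
  · rw [hv hi]
    exact determines_window f i w v fun j hj => if_neg fun h => hi (h hj)

theorem commComplex_split_of_determines {B J : Type*} {f : (J → B) → (I → A)} {I0 : Set I}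
    {W₀ W₁ : Set J} (hW : Disjoint W₀ W₁) (h₀ : ∀ i ∈ I0, Determines f i W₀)
    (h₁ : ∀ i ∉ I0, Determines f i W₁) : ∀ S ∈ commComplex f, S ⊆ I0 ∨ S ⊆ I0ᶜ := by
  rintro S ⟨j, hj⟩
  rw [mem_iInter₂] at hj
  by_contra! hS
  obtain ⟨⟨i₁, hi₁S, hi₁⟩, ⟨i₀, hi₀S, hi₀⟩⟩ := And.imp not_subset.1 not_subset.1 hS
  exact hW.notMem_of_mem_left (window_subset_of_determines f (h₀ i₀ (not_not.1 hi₀)) (hj i₀ hi₀S))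
    (window_subset_of_determines f (h₁ i₁ hi₁) (hj i₁ hi₁S))

open Classical in
noncomputable def retractOn (L : Set (I → A)) (y₀ : I → A) (P : Set I) (x : I → A) : I → A :=
  if ∃ y ∈ L, EqOn x y P then x else y₀

variable {L : Set (I → A)} {y₀ : I → A} {P : Set I}

theorem retractOn_of_mem {x : I → A} (hx : x ∈ L) : retractOn L y₀ P x = x :=
  if_pos ⟨x, hx, fun _ _ => rfl⟩

theorem exists_eqOn_retractOn (hy₀ : y₀ ∈ L) (x : I → A) :
    ∃ y ∈ L, EqOn (retractOn L y₀ P x) y P := by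
  unfold retractOn
  split_ifs with h
  exacts [h, ⟨y₀, hy₀, fun _ _ => rfl⟩]

theorem determines_retractOn {i : I} (hi : i ∈ P) : Determines (retractOn L y₀ P) i P := by
  intro x x' hxx'
  have hiff : (∃ y ∈ L, EqOn x y P) ↔ ∃ y ∈ L, EqOn x' y P :=
    exists_congr fun y => and_congr_right fun _ =>
      ⟨fun h => (EqOn.symm hxx').trans h, fun h => EqOn.trans hxx' h⟩
  unfold retractOn
  by_cases h : ∃ y ∈ L, EqOn x y P
  · rw [if_pos h, if_pos (hiff.1 h)]
    exact hxx' i hi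
  · rw [if_neg h, if_neg (mt hiff.2 h)]

end Split

theorem exists_generator_of_splitBy {A I : Type} [Finite A] [Nonempty I] {L : Set (I → A)}
    {I0 : Set I} (hL : SplitBy L I0) :
    ∃ (B : Type) (_ : Finite B) (f : (I → B) → (I → A)), range f = L ∧
      (∀ i ∈ I0, Determines f i I0) ∧ (∀ i ∉ I0, Determines f i I0ᶜ) := by
  classical
  rcases L.eq_empty_or_nonempty with rfl | ⟨y₀, hy₀⟩
  · exact ⟨Empty, inferInstance, isEmptyElim, range_eq_empty _,
      fun _ _ x => isEmptyElim x, fun _ _ x => isEmptyElim x⟩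
  let g (x : I → A) : I → A := I0.piecewise (retractOn L y₀ I0 x) (retractOn L y₀ I0ᶜ x)
  refine ⟨A, inferInstance, g, Subset.antisymm ?_ ?_, ?_, ?_⟩
  · rintro _ ⟨x, rfl⟩
    rw [hL]
    obtain ⟨y, hy, hxy⟩ := exists_eqOn_retractOn (P := I0) hy₀ x
    obtain ⟨y', hy', hxy'⟩ := exists_eqOn_retractOn (P := I0ᶜ) hy₀ x
    exact ⟨⟨y, hy, fun i hi => (piecewise_eq_of_mem _ _ _ hi).trans (hxy hi)⟩,
      ⟨y', hy', fun i hi => (piecewise_eq_of_notMem _ _ _ hi).trans (hxy' hi)⟩⟩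
  · intro x hx
    exact ⟨x, by simp only [g, retractOn_of_mem hx, piecewise_same]⟩
  · intro i hi x x' hxx'
    simp only [g, piecewise_eq_of_mem _ _ _ hi]
    exact determines_retractOn hi x x' hxx'
  · intro i hi x x' hxx'
    simp only [g, piecewise_eq_of_notMem _ _ _ hi]
    exact determines_retractOn (P := I0ᶜ) hi x x' hxx'

theorem stmt8_general {A I : Type} [Finite A] [Finite I]
    (L : Set (I → A)) :
    (¬ ∃ I0 : Set I, I0 ≠ ∅ ∧ I0 ≠ Set.univ ∧ SplitBy L I0) ↔
      ∀ K : Set (Set I), Generates K L → ConnectedComplex K := by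
  constructor
  · rintro hirr K ⟨B, J, _, _, _, f, rfl, hK⟩ ⟨I0, hne, hnu, hdisc⟩
    exact hirr ⟨I0, hne, hnu, splitBy_range_of_commComplex fun S hS => hdisc S (hK hS)⟩
  · rintro hcon ⟨I0, hne, hnu, hsplit⟩
    obtain ⟨i, -⟩ := nonempty_iff_ne_empty.2 hne
    have : Nonempty I := ⟨i⟩
    obtain ⟨B, _, f, rfl, h₀, h₁⟩ := exists_generator_of_splitBy hsplit
    exact hcon _ ⟨B, I, inferInstance, inferInstance, inferInstance, f, rfl, subset_rfl⟩
      ⟨I0, hne, hnu, commComplex_split_of_determines disjoint_compl_right h₀ h₁⟩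

/-- `L` is irreducible iff every complex generating `L` is
connected. -/
theorem stmt8 {A I : Type} [Finite A] [Finite I] (hI : 2 ≤ Nat.card I)
    (L : Set (I → A)) :
    (¬ ∃ I0 : Set I, I0 ≠ ∅ ∧ I0 ≠ Set.univ ∧ SplitBy L I0) ↔
      ∀ K : Set (Set I), Generates K L → ConnectedComplex K :=
  stmt8_general L
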